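/- For any formula ψ, if ψ is valid on all finite (m,n)-accessible N-frames, then ψ is valid on all finite Sub(ψ)-(m,n)-accessible N-frames. -/
import Mathlib


inductive Formula : Type
  | bot : Formula
  | var : ℕ → Formula
  | neg : Formula → Formula
  | or : Formula → Formula → Formula
  | box : Formula → Formula
  deriving DecidableEq

namespace Formula

def imp (φ ψ : Formula) : Formula := .or (.neg φ) ψ

def and (φ ψ : Formula) : Formula := .neg (.or (.neg φ) (.neg ψ))

/-- □^n φ -/
def boxn : ℕ → Formula → Formula
  | 0, φ => φ
  | k+1, φ => .box (boxn k φ)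

/-- the set of subformulas -/
def sub : Formula → Finset Formula
  | .bot => {.bot}
  | .var p => {.var p}
  | .neg φ => insert (.neg φ) φ.sub
  | .or φ ψ => insert (.or φ ψ) (φ.sub ∪ ψ.sub)
  | .box φ => insert (.box φ) φ.sub

/-- ∼ρ -/
def negg : Formula → Formula
  | .neg φ => φ
  | φ => .neg φ

end Formula

def NSub (ψ : Formula) : Finset Formula := ψ.sub ∪ ψ.sub.image Formula.negg

/-- boolean evaluation treating boxed formulas and variables as atoms -/
def evalP (v : Formula → Bool) : Formula → Bool
  | .bot => false
  | .var p => v (.var p)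
  | .neg φ => !(evalP v φ)
  | .or φ ψ => evalP v φ || evalP v ψ
  | .box φ => v (.box φ)

/-- propositional tautologies in the modal language -/
def Tautology (φ : Formula) : Prop := ∀ v, evalP v φ = true

/-- Provability in NA_{m,n} (ros = false) and NRA_{m,n} (ros = true):
    propositional tautologies, the scheme □^n φ → □^m φ, modus ponens,
    necessitation, and (if ros) the rule Ros^□ : ¬□φ / ¬□□φ. -/
inductive Prov (m n : ℕ) (ros : Bool) : Formula → Prop
  | taut {φ} : Tautology φ → Prov m n ros φ
  | axA (φ) : Prov m n ros ((Formula.boxn n φ).imp (Formula.boxn m φ))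
  | mp {φ ψ} : Prov m n ros (φ.imp ψ) → Prov m n ros φ → Prov m n ros ψ
  | nec {φ} : Prov m n ros φ → Prov m n ros (.box φ)
  | ros {φ} : ros = true → Prov m n ros (.neg (.box φ)) →
      Prov m n ros (.neg (.box (.box φ)))

/-- An N-frame on world set W: a binary relation R_φ for each formula φ. -/
abbrev NFrame (W : Type) := Formula → W → W → Prop

structure NModel (W : Type) where
  Rel : NFrame W
  V : W → ℕ → Prop

/-- satisfaction in an N-model -/
def Sat {W : Type} (M : NModel W) : W → Formula → Prop
  | _, .bot => False
  | w, .var p => M.V w p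
  | w, .neg φ => ¬ Sat M w φ
  | w, .or φ ψ => Sat M w φ ∨ Sat M w ψ
  | w, .box φ => ∀ w', M.Rel φ w w' → Sat M w' φ

/-- x R_φ^k y : there is a φ-path of length k from x to y -/
def FPath {W : Type} (R : NFrame W) (φ : Formula) : ℕ → W → W → Prop
  | 0, x, y => x = y
  | k+1, x, y => ∃ w, R (Formula.boxn k φ) x w ∧ FPath R φ k w y

/-- (m,n)-accessibility for φ -/
def AccFor {W : Type} (R : NFrame W) (m n : ℕ) (φ : Formula) : Prop :=
  ∀ x y, FPath R φ m x y → FPath R φ n x y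

/-- Γ-(m,n)-accessibility -/
def SubAcc {W : Type} (R : NFrame W) (m n : ℕ) (Γ : Finset Formula) : Prop :=
  ∀ φ, Formula.boxn m φ ∈ Γ → AccFor R m n φ

/-- (m,n)-accessibility -/
def Accessible {W : Type} (R : NFrame W) (m n : ℕ) : Prop :=
  ∀ φ, AccFor R m n φ

def ValidM {W : Type} (M : NModel W) (ψ : Formula) : Prop := ∀ w, Sat M w ψ

def ValidF {W : Type} (R : NFrame W) (ψ : Formula) : Prop :=
  ∀ V : W → ℕ → Prop, ValidM ⟨R, V⟩ ψ




open Formula in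
lemma mem_sub_self (φ : Formula) : φ ∈ φ.sub := by
  cases φ <;> simp [Formula.sub]

lemma sub_trans : ∀ φ χ : Formula, χ ∈ φ.sub → χ.sub ⊆ φ.sub := by
  intro φ
  induction φ with
  | bot => intro χ h; simp [Formula.sub] at h; subst h; exact Finset.Subset.refl _
  | var p => intro χ h; simp [Formula.sub] at h; subst h; exact Finset.Subset.refl _
  | neg φ ih =>
      intro χ h
      rw [Formula.sub] at h
      rcases Finset.mem_insert.1 h with h | h
      · subst h; exact Finset.Subset.refl _
      · exact (ih χ h).trans (by rw [Formula.sub]; exact Finset.subset_insert _ _)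
  | or φ₁ φ₂ ih1 ih2 =>
      intro χ h
      rw [Formula.sub] at h
      rcases Finset.mem_insert.1 h with h | h
      · subst h; exact Finset.Subset.refl _
      · rcases Finset.mem_union.1 h with h | h
        · exact (ih1 χ h).trans ((Finset.subset_union_left).trans (by rw [Formula.sub]; exact Finset.subset_insert _ _))
        · exact (ih2 χ h).trans ((Finset.subset_union_right).trans (by rw [Formula.sub]; exact Finset.subset_insert _ _))
  | box φ ih =>
      intro χ h
      rw [Formula.sub] at h
      rcases Finset.mem_insert.1 h with h | h
      · subst h; exact Finset.Subset.refl _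
      · exact (ih χ h).trans (by rw [Formula.sub]; exact Finset.subset_insert _ _)

lemma boxn_mem_sub (φ : Formula) : ∀ j k : ℕ, j ≤ k →
    Formula.boxn j φ ∈ (Formula.boxn k φ).sub := by
  intro j k
  induction k with
  | zero => intro hj; interval_cases j; exact mem_sub_self _
  | succ k ih =>
      intro hj
      rcases Nat.eq_or_lt_of_le hj with h | h
      · subst h; exact mem_sub_self _
      · show Formula.boxn j φ ∈ (Formula.box (Formula.boxn k φ)).sub
        rw [Formula.sub]
        exact Finset.mem_insert_of_mem (ih (Nat.lt_succ_iff.1 h))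

lemma boxn_chain {Γ : Finset Formula} {φ : Formula} {k : ℕ}
    (h : Formula.boxn k φ ∈ Γ → False) (hΓ : ∀ χ ∈ Γ, χ.sub ⊆ Γ) :
    ∀ j, k ≤ j → Formula.boxn j φ ∉ Γ := by
  intro j hj hmem
  exact h (hΓ _ hmem (boxn_mem_sub φ k j hj))

/-- The modified frame. -/
def Rstar {W : Type} (R : NFrame W) (ψ : Formula) (m n : ℕ) : NFrame W :=
  fun φ x y => if Formula.box φ ∈ ψ.sub then R φ x y else m < n

lemma fpath_mono {W : Type} {R S : NFrame W} {φ : Formula} :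
    ∀ j : ℕ, (∀ k, k < j → ∀ x y, R (Formula.boxn k φ) x y → S (Formula.boxn k φ) x y) →
    ∀ x y, FPath R φ j x y → FPath S φ j x y := by
  intro j
  induction j with
  | zero => intro _ x y hp; exact hp
  | succ j ih =>
      intro hk x y hp
      obtain ⟨w, hl, hp⟩ := hp
      exact ⟨w, hk j (Nat.lt_succ_self j) x w hl,
        ih (fun k hk' => hk k (hk'.trans (Nat.lt_succ_self j))) w y hp⟩

lemma fpath_extend {W : Type} {R : NFrame W} {φ : Formula} {x y : W} {j : ℕ}
    (hp : FPath R φ j x y) :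
    ∀ d : ℕ, (∀ k, j ≤ k → k < j + d → R (Formula.boxn k φ) x x) →
    FPath R φ (j + d) x y := by
  intro d
  induction d with
  | zero => intro _; exact hp
  | succ d ih =>
      intro hk
      exact ⟨x, hk (j + d) (Nat.le_add_right _ _) (Nat.lt_succ_self _),
        ih (fun k h1 h2 => hk k h1 (h2.trans (Nat.lt_succ_self _)))⟩

lemma sub_closed (ψ : Formula) : ∀ χ ∈ ψ.sub, χ.sub ⊆ ψ.sub :=
  fun χ h => sub_trans ψ χ h

lemma rstar_acc {W : Type} (R : NFrame W) (ψ : Formula) (m n : ℕ)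
    (hsa : SubAcc R m n ψ.sub) : Accessible (Rstar R ψ m n) m n := by
  intro φ x y hp
  by_cases hb : Formula.boxn m φ ∈ ψ.sub
  · -- all boxn j φ, j ≤ m, are in ψ.sub
    have hj : ∀ j, j ≤ m → Formula.boxn j φ ∈ ψ.sub := fun j hle =>
      sub_closed ψ _ hb (boxn_mem_sub φ j m hle)
    have h1 : FPath R φ m x y := by
      refine fpath_mono m (fun k hk x y hr => ?_) x y hp
      have : Formula.box (Formula.boxn k φ) ∈ ψ.sub := hj (k + 1) hk
      rwa [Rstar, if_pos this] at hr
    have h2 : FPath R φ n x y := hsa φ hb x y h1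
    refine fpath_mono n (fun k hk x y hr => ?_) x y h2
    by_cases hc : Formula.box (Formula.boxn k φ) ∈ ψ.sub
    · rwa [Rstar, if_pos hc]
    · rw [Rstar, if_neg hc]
      -- k+1 > m since otherwise boxn (k+1) φ ∈ ψ.sub; and k+1 ≤ n
      rcases Nat.lt_or_ge m (k + 1) with h | h
      · exact Nat.lt_of_lt_of_le h hk
      · exact absurd (hj (k + 1) h) hc
  · -- boxn j φ ∉ ψ.sub for all j ≥ m
    have hout : ∀ j, m ≤ j → Formula.boxn j φ ∉ ψ.sub :=
      boxn_chain (fun h => hb h) (sub_closed ψ)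
    rcases lt_trichotomy m n with hmn | hmn | hmn
    · have := fpath_extend hp (n - m) (fun k h1 h2 => by
        have hh : (Formula.boxn k φ).box ∉ ψ.sub := hout (k + 1) (Nat.le_succ_of_le h1)
        rw [Rstar, if_neg hh]
        exact hmn)
      rwa [Nat.add_sub_cancel' (le_of_lt hmn)] at this
    · subst hmn; exact hp
    · -- m > n ≥ 0, so m = m' + 1; top link is empty
      obtain ⟨m', rfl⟩ : ∃ m', m = m' + 1 :=
        ⟨m - 1, (Nat.succ_pred_eq_of_pos (Nat.lt_of_le_of_lt (Nat.zero_le n) hmn)).symm⟩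
      obtain ⟨w, hl, -⟩ := hp
      have hh : (Formula.boxn m' φ).box ∉ ψ.sub := hout (m' + 1) le_rfl
      rw [Rstar, if_neg hh] at hl
      exact absurd hl (Nat.lt_asymm hmn)

lemma sat_agree {W : Type} (R : NFrame W) (ψ : Formula) (m n : ℕ) (V : W → ℕ → Prop) :
    ∀ φ, φ ∈ ψ.sub → ∀ w, (Sat ⟨Rstar R ψ m n, V⟩ w φ ↔ Sat ⟨R, V⟩ w φ) := by
  intro φ
  induction φ with
  | bot => intro _ w; exact Iff.rfl
  | var p => intro _ w; exact Iff.rfl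
  | neg φ ih =>
      intro hmem w
      have hφ : φ ∈ ψ.sub := sub_closed ψ _ hmem
        (by rw [Formula.sub]; exact Finset.mem_insert_of_mem (mem_sub_self φ))
      exact not_congr (ih hφ w)
  | or φ₁ φ₂ ih1 ih2 =>
      intro hmem w
      have hs : (Formula.or φ₁ φ₂).sub ⊆ ψ.sub := sub_closed ψ _ hmem
      have h1 : φ₁ ∈ ψ.sub := hs (by rw [Formula.sub]; exact Finset.mem_insert_of_mem (Finset.mem_union_left _ (mem_sub_self φ₁)))
      have h2 : φ₂ ∈ ψ.sub := hs (by rw [Formula.sub]; exact Finset.mem_insert_of_mem (Finset.mem_union_right _ (mem_sub_self φ₂)))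
      exact or_congr (ih1 h1 w) (ih2 h2 w)
  | box φ ih =>
      intro hmem w
      have hφ : φ ∈ ψ.sub := sub_closed ψ _ hmem
        (by rw [Formula.sub]; exact Finset.mem_insert_of_mem (mem_sub_self φ))
      show (∀ w', Rstar R ψ m n φ w w' → _) ↔ (∀ w', R φ w w' → _)
      have hrel : ∀ x y, Rstar R ψ m n φ x y ↔ R φ x y := by
        intro x y; rw [Rstar, if_pos hmem]
      exact forall_congr' fun w' =>
        imp_congr (hrel w w') (ih hφ w')

theorem stmt11 (m n : ℕ) (ψ : Formula)
    (h : ∀ (W : Type) [Fintype W] [Nonempty W] (R : NFrame W),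
      Accessible R m n → ValidF R ψ) :
    ∀ (W : Type) [Fintype W] [Nonempty W] (R : NFrame W),
      SubAcc R m n ψ.sub → ValidF R ψ := by
  intro W _ _ R hsa V w
  have hacc := rstar_acc R ψ m n hsa
  have := h W (Rstar R ψ m n) hacc V w
  exact (sat_agree R ψ m n V ψ (mem_sub_self ψ) w).1 this
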